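/- arXiv:2403.14178 — 3 statements merged into one kernel-verified Lean document; each statement's English description precedes it below -/
import Mathlib

section
/- For all positive real parameters α, β, ξ and all stresses m ∈ ℝ², τ ∈ ℝ^{2×2} with (m, τ) ≠ (0, 0), the strains approach their limiting level asymptotically along rays of increasing stress: Q(S(t·m, t·τ)) tends to 1 as the real number t tends to +∞. -/
noncomputable section

/-- The quadratic form `Q(χ, γ)` on strains. -/
def Qform (α β ξ : ℝ) (χ : Fin 2 → ℝ) (γ : Fin 2 → Fin 2 → ℝ) : ℝ :=
  β ^ 2 * (α ^ 2 * ((χ 0) ^ 2 + (χ 1) ^ 2) +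
    ξ ^ 2 * ((γ 0 0) ^ 2 + (γ 0 1) ^ 2 + (γ 1 0) ^ 2 + (γ 1 1) ^ 2))

/-- The quadratic form `Q*(m, τ)` on stresses. -/
def Qstar (α β ξ : ℝ) (m : Fin 2 → ℝ) (τ : Fin 2 → Fin 2 → ℝ) : ℝ :=
  β ^ 2 * (((m 0) ^ 2 + (m 1) ^ 2) / α ^ 2 +
    ((τ 0 0) ^ 2 + (τ 0 1) ^ 2 + (τ 1 0) ^ 2 + (τ 1 1) ^ 2) / ξ ^ 2)

/-- The strain-limiting constitutive map `S` sending stresses to strains. -/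
def Smap (α β ξ : ℝ) (m : Fin 2 → ℝ) (τ : Fin 2 → Fin 2 → ℝ) :
    (Fin 2 → ℝ) × (Fin 2 → Fin 2 → ℝ) :=
  (fun i => m i / (α ^ 2 * (1 + Real.sqrt (Qstar α β ξ m τ))),
   fun i j => τ i j / (ξ ^ 2 * (1 + Real.sqrt (Qstar α β ξ m τ))))

/-- The inverse constitutive map `T` sending strains to stresses. -/
def Tmap (α β ξ : ℝ) (χ : Fin 2 → ℝ) (γ : Fin 2 → Fin 2 → ℝ) :
    (Fin 2 → ℝ) × (Fin 2 → Fin 2 → ℝ) :=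
  (fun i => α ^ 2 * χ i / (1 - Real.sqrt (Qform α β ξ χ γ)),
   fun i j => ξ ^ 2 * γ i j / (1 - Real.sqrt (Qform α β ξ χ γ)))

/-- The strain-energy density `W(χ, γ)`. -/
def Wdens (α β ξ : ℝ) (χ : Fin 2 → ℝ) (γ : Fin 2 → Fin 2 → ℝ) : ℝ :=
  -(1 / β ^ 2) * (Real.sqrt (Qform α β ξ χ γ) +
    Real.log (1 - Real.sqrt (Qform α β ξ χ γ)))

/-- The complementary strain-energy density `W*(m, τ)`. -/
def Wstar (α β ξ : ℝ) (m : Fin 2 → ℝ) (τ : Fin 2 → Fin 2 → ℝ) : ℝ :=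
  (1 / β ^ 2) * (Real.sqrt (Qstar α β ξ m τ) -
    Real.log (1 + Real.sqrt (Qstar α β ξ m τ)))

/-! `S` only rescales the stress, and `Q(S(m, τ)) = Q*(m, τ) / (1 + √Q*(m, τ))²`. Since `Q*` is
homogeneous of degree two, along the ray through `(m, τ)` this is `(ts / (1 + ts))²` with
`s = √Q*(m, τ) > 0`, which tends to `1`. -/

open Filter Topology

theorem tendsto_div_one_add_atTop : Tendsto (fun s : ℝ => s / (1 + s)) atTop (𝓝 1) := by
  have h : Tendsto (fun s : ℝ => 1 - (1 + s)⁻¹) atTop (𝓝 (1 - 0)) :=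
    tendsto_const_nhds.sub (tendsto_atTop_add_const_left _ 1 tendsto_id).inv_tendsto_atTop
  rw [sub_zero] at h
  refine h.congr' ?_
  filter_upwards [eventually_ge_atTop 0] with s hs
  field_simp
  ring

theorem sq_add_sq_pos_of_ne_zero {m : Fin 2 → ℝ} (hm : m ≠ 0) : 0 < m 0 ^ 2 + m 1 ^ 2 := by
  obtain ⟨i, hi⟩ := Function.ne_iff.mp hm
  fin_cases i
  · have : m 0 ≠ 0 := hi
    positivity
  · have : m 1 ≠ 0 := hi
    positivity

theorem sum_sq_entries_pos_of_ne_zero {τ : Fin 2 → Fin 2 → ℝ} (hτ : τ ≠ 0) :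
    0 < τ 0 0 ^ 2 + τ 0 1 ^ 2 + τ 1 0 ^ 2 + τ 1 1 ^ 2 := by
  obtain ⟨i, hi⟩ := Function.ne_iff.mp hτ
  have hrow := sq_add_sq_pos_of_ne_zero hi
  fin_cases i <;> simp only [Fin.zero_eta, Fin.mk_one] at hrow <;>
    nlinarith [sq_nonneg (τ 0 0), sq_nonneg (τ 0 1), sq_nonneg (τ 1 0), sq_nonneg (τ 1 1)]

theorem Qstar_pos {α β ξ : ℝ} (hα : 0 < α) (hβ : 0 < β) (hξ : 0 < ξ)
    {m : Fin 2 → ℝ} {τ : Fin 2 → Fin 2 → ℝ} (hmτ : (m, τ) ≠ (0, 0)) :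
    0 < Qstar α β ξ m τ := by
  unfold Qstar
  rcases not_and_or.mp (mt Prod.ext_iff.mpr hmτ) with hm | hτ
  · have := sq_add_sq_pos_of_ne_zero hm
    positivity
  · have := sum_sq_entries_pos_of_ne_zero hτ
    positivity

section StrainLimiting

variable (α β ξ : ℝ)

theorem Qstar_nonneg (m : Fin 2 → ℝ) (τ : Fin 2 → Fin 2 → ℝ) : 0 ≤ Qstar α β ξ m τ := by
  unfold Qstar
  positivity

theorem Qstar_smul (t : ℝ) (m : Fin 2 → ℝ) (τ : Fin 2 → Fin 2 → ℝ) :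
    Qstar α β ξ (fun i => t * m i) (fun i j => t * τ i j) = t ^ 2 * Qstar α β ξ m τ := by
  unfold Qstar
  ring

theorem Qform_Smap (m : Fin 2 → ℝ) (τ : Fin 2 → Fin 2 → ℝ) :
    Qform α β ξ (Smap α β ξ m τ).1 (Smap α β ξ m τ).2 =
      Qstar α β ξ m τ / (1 + √(Qstar α β ξ m τ)) ^ 2 := by
  have hD : 1 + √(Qstar α β ξ m τ) ≠ 0 := by positivity
  unfold Qform Smap Qstar
  -- the split is needed for `field_simp`; with `x / 0 = 0` the identity holds in every case
  rcases eq_or_ne α 0 with rfl | hα <;> rcases eq_or_ne ξ 0 with rfl | hξ <;> field_simp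

theorem Qform_Smap_smul {t : ℝ} (ht : 0 ≤ t) (m : Fin 2 → ℝ) (τ : Fin 2 → Fin 2 → ℝ) :
    Qform α β ξ (Smap α β ξ (fun i => t * m i) (fun i j => t * τ i j)).1
        (Smap α β ξ (fun i => t * m i) (fun i j => t * τ i j)).2 =
      (t * √(Qstar α β ξ m τ) / (1 + t * √(Qstar α β ξ m τ))) ^ 2 := by
  have hsqrt : √(t ^ 2 * Qstar α β ξ m τ) = t * √(Qstar α β ξ m τ) := by
    rw [Real.sqrt_mul (sq_nonneg t), Real.sqrt_sq ht]
  rw [Qform_Smap, Qstar_smul, hsqrt, div_pow, mul_pow, Real.sq_sqrt (Qstar_nonneg α β ξ m τ)]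

end StrainLimiting

/-- for nonzero stresses, the strains approach their limiting level
asymptotically along rays of increasing stress:
`Q(S(t·m, t·τ)) → 1` as `t → +∞`. -/
theorem Q_of_S_tendsto_one (α β ξ : ℝ) (hα : 0 < α) (hβ : 0 < β) (hξ : 0 < ξ)
    (m : Fin 2 → ℝ) (τ : Fin 2 → Fin 2 → ℝ) (hmτ : (m, τ) ≠ (0, 0)) :
    Filter.Tendsto
      (fun t : ℝ =>
        Qform α β ξ (Smap α β ξ (fun i => t * m i) (fun i j => t * τ i j)).1
          (Smap α β ξ (fun i => t * m i) (fun i j => t * τ i j)).2)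
      Filter.atTop (nhds 1) := by
  have hq : 0 < √(Qstar α β ξ m τ) := Real.sqrt_pos.mpr (Qstar_pos hα hβ hξ hmτ)
  have hlim := (tendsto_div_one_add_atTop.comp (tendsto_id.atTop_mul_const hq)).pow 2
  rw [one_pow] at hlim
  refine hlim.congr' ?_
  filter_upwards [eventually_ge_atTop 0] with t ht
  exact (Qform_Smap_smul α β ξ ht m τ).symm
end
end

section
/- (Proposition 3.1) Let α, β, ξ be positive reals and let χ ∈ ℝ², γ ∈ ℝ^{2×2} satisfy 0 < Q(χ, γ) < 1. Then the Hessian of the strain-energy density W at (χ, γ) is positive semi-definite: W is twice Fréchet differentiable at (χ, γ) and D²W(χ, γ)[(a, b), (a, b)] ≥ 0 for all a ∈ ℝ² and b ∈ ℝ^{2×2}. -/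
/-!
Write `Q(p) = B(p, p)` for the symmetric, positive semidefinite bilinear form `B` polarising `Q`,
so that `W = φ ∘ Q` with `φ(t) = -(√t + log (1 - √t)) / β²`. By the chain rule,
`D²W(p)[h, h] = 2 φ'(Q p) B(h, h) + 4 φ''(Q p) B(p, h)²`, and on `0 < t < 1` both
`φ'(t) = 1 / (2β² (1 - √t))` and `φ''(t) = 1 / (4β² √t (1 - √t)²)` are nonnegative.
-/

noncomputable section

open Filter Topology

section QuadraticComp

variable {E : Type*} [NormedAddCommGroup E] [NormedSpace ℝ E] {B : E →L[ℝ] E →L[ℝ] ℝ}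

theorem hasFDerivAt_bilinear_self (hB : ∀ x y, B x y = B y x) (p : E) :
    HasFDerivAt (fun x => B x x) ((2 : ℝ) • B p) p := by
  refine (B.hasFDerivAt_of_bilinear (hasFDerivAt_id p) (hasFDerivAt_id p)).congr_fderiv ?_
  ext h
  simp [two_smul, hB h p]

theorem HasDerivAt.comp_bilinear_self {f : ℝ → ℝ} {f' : ℝ} {p : E}
    (hB : ∀ x y, B x y = B y x) (hf : HasDerivAt f f' (B p p)) :
    HasFDerivAt (fun x => f (B x x)) ((2 * f') • B p) p := by
  refine (hf.comp_hasFDerivAt (f := fun x => B x x) p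
    (hasFDerivAt_bilinear_self hB p)).congr_fderiv ?_
  rw [smul_smul, mul_comm]

theorem hasFDerivAt_fderiv_comp_bilinear_self {f f' : ℝ → ℝ} {f'' : ℝ} {p : E}
    (hB : ∀ x y, B x y = B y x) (hf : ∀ᶠ t in 𝓝 (B p p), HasDerivAt f (f' t) t)
    (hf' : HasDerivAt f' f'' (B p p)) :
    HasFDerivAt (fderiv ℝ fun x => f (B x x))
      ((2 * f' (B p p)) • B + ((4 * f'') • B p).smulRight (B p)) p := by
  have hQ : Tendsto (fun x => B x x) (𝓝 p) (𝓝 (B p p)) :=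
    (hasFDerivAt_bilinear_self hB p).continuousAt
  have hgrad : fderiv ℝ (fun x => f (B x x)) =ᶠ[𝓝 p] fun x => (2 * f' (B x x)) • B x :=
    (hQ.eventually hf).mono fun x hx => (hx.comp_bilinear_self hB).fderiv
  have hcoeff : HasFDerivAt (fun x => 2 * f' (B x x)) ((4 * f'') • B p) p := by
    refine ((hf'.comp_bilinear_self hB).const_mul 2).congr_fderiv ?_
    rw [smul_smul]; ring_nf
  exact (hcoeff.smul B.hasFDerivAt).congr_of_eventuallyEq hgrad

theorem hessian_comp_bilinear_self_nonneg (hB : ∀ x, 0 ≤ B x x) {p : E} {a b : ℝ}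
    (ha : 0 ≤ a) (hb : 0 ≤ b) (h : E) :
    0 ≤ ((2 * a) • B + ((4 * b) • B p).smulRight (B p)) h h := by
  simp only [add_apply, smul_apply, ContinuousLinearMap.smulRight_apply, smul_eq_mul]
  have hBh := hB h
  have hsq := mul_self_nonneg (B p h)
  rw [mul_assoc _ (B p h)]
  positivity

end QuadraticComp

notation "Strain" => (Fin 2 → ℝ) × (Fin 2 → Fin 2 → ℝ)

def chiCoord (i : Fin 2) : Strain →L[ℝ] ℝ :=
  (ContinuousLinearMap.proj i).comp (ContinuousLinearMap.fst ℝ _ _)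

def gammaCoord (i j : Fin 2) : Strain →L[ℝ] ℝ :=
  (ContinuousLinearMap.proj j).comp
    ((ContinuousLinearMap.proj i).comp (ContinuousLinearMap.snd ℝ _ (Fin 2 → Fin 2 → ℝ)))

def strainForm (α β ξ : ℝ) : Strain →L[ℝ] Strain →L[ℝ] ℝ :=
  (β ^ 2 * α ^ 2) • ∑ i, (chiCoord i).smulRight (chiCoord i) +
    (β ^ 2 * ξ ^ 2) • ∑ i, ∑ j, (gammaCoord i j).smulRight (gammaCoord i j)

theorem strainForm_apply (α β ξ : ℝ) (x y : Strain) :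
    strainForm α β ξ x y = β ^ 2 * α ^ 2 * ∑ i, x.1 i * y.1 i +
      β ^ 2 * ξ ^ 2 * ∑ i, ∑ j, x.2 i j * y.2 i j := by
  simp only [strainForm, chiCoord, gammaCoord, add_apply, smul_apply, sum_apply,
    ContinuousLinearMap.smulRight_apply, ContinuousLinearMap.comp_apply,
    ContinuousLinearMap.coe_fst', ContinuousLinearMap.coe_snd', ContinuousLinearMap.proj_apply,
    smul_eq_mul]

theorem strainForm_comm (α β ξ : ℝ) (x y : Strain) :
    strainForm α β ξ x y = strainForm α β ξ y x := by
  simp only [strainForm_apply, mul_comm (x.1 _), mul_comm (x.2 _ _)]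

theorem strainForm_self_nonneg (α β ξ : ℝ) (x : Strain) : 0 ≤ strainForm α β ξ x x := by
  have hχ : 0 ≤ ∑ i, x.1 i * x.1 i := Finset.sum_nonneg fun i _ => mul_self_nonneg _
  have hγ : 0 ≤ ∑ i, ∑ j, x.2 i j * x.2 i j :=
    Finset.sum_nonneg fun i _ => Finset.sum_nonneg fun j _ => mul_self_nonneg _
  rw [strainForm_apply]
  positivity

theorem Qform_eq_strainForm (α β ξ : ℝ) (x : Strain) :
    Qform α β ξ x.1 x.2 = strainForm α β ξ x x := by
  simp only [Qform, strainForm_apply, Fin.sum_univ_two]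
  ring

theorem one_sub_sqrt_pos {t : ℝ} (ht : t < 1) : 0 < 1 - √t :=
  sub_pos.2 ((Real.sqrt_lt' one_pos).2 (by rwa [one_pow]))

def energyProfile (β t : ℝ) : ℝ := -(1 / β ^ 2) * (√t + Real.log (1 - √t))

theorem hasDerivAt_energyProfile (β : ℝ) {t : ℝ} (ht₀ : 0 < t) (ht₁ : t < 1) :
    HasDerivAt (energyProfile β) ((β ^ 2)⁻¹ * (2 * (1 - √t))⁻¹) t := by
  have hs₀ : √t ≠ 0 := (Real.sqrt_pos.2 ht₀).ne'
  have hs₁ : 1 - √t ≠ 0 := (one_sub_sqrt_pos ht₁).ne'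
  have hsqrt := Real.hasDerivAt_sqrt ht₀.ne'
  refine ((hsqrt.add (((hasDerivAt_const t 1).sub hsqrt).log hs₁)).const_mul _).congr_deriv ?_
  simp only [Pi.sub_apply]
  field_simp
  ring

theorem hasDerivAt_inv_two_mul_one_sub_sqrt {t : ℝ} (ht₀ : 0 < t) (ht₁ : t < 1) :
    HasDerivAt (fun t => (2 * (1 - √t))⁻¹) ((4 * √t * (1 - √t) ^ 2)⁻¹) t := by
  have hs₀ : √t ≠ 0 := (Real.sqrt_pos.2 ht₀).ne'
  have hs₁ : 1 - √t ≠ 0 := (one_sub_sqrt_pos ht₁).ne'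
  have hsqrt := Real.hasDerivAt_sqrt ht₀.ne'
  refine ((((hasDerivAt_const t 1).sub hsqrt).const_mul 2).inv
    (mul_ne_zero two_ne_zero hs₁)).congr_deriv ?_
  simp only [Pi.sub_apply]
  field_simp
  ring

theorem Wdens_eq_energyProfile (α β ξ : ℝ) (x : Strain) :
    Wdens α β ξ x.1 x.2 = energyProfile β (strainForm α β ξ x x) := by
  rw [Wdens, Qform_eq_strainForm, energyProfile]

theorem hessian_Wdens_posSemidef_general (α β ξ : ℝ)
    (χ : Fin 2 → ℝ) (γ : Fin 2 → Fin 2 → ℝ)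
    (h0 : 0 < Qform α β ξ χ γ) (h1 : Qform α β ξ χ γ < 1) :
    ∃ D : ((Fin 2 → ℝ) × (Fin 2 → Fin 2 → ℝ)) →L[ℝ]
        ((Fin 2 → ℝ) × (Fin 2 → Fin 2 → ℝ)) →L[ℝ] ℝ,
      HasFDerivAt
        (fderiv ℝ (fun p : (Fin 2 → ℝ) × (Fin 2 → Fin 2 → ℝ) => Wdens α β ξ p.1 p.2))
        D (χ, γ) ∧
      ∀ (a : Fin 2 → ℝ) (b : Fin 2 → Fin 2 → ℝ), 0 ≤ D (a, b) (a, b) := by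
  obtain ⟨hq₀, hq₁⟩ : strainForm α β ξ (χ, γ) (χ, γ) ∈ Set.Ioo 0 1 := by
    rw [← Qform_eq_strainForm]; exact ⟨h0, h1⟩
  simp only [Wdens_eq_energyProfile]
  refine ⟨_, hasFDerivAt_fderiv_comp_bilinear_self (strainForm_comm α β ξ)
    (eventually_of_mem (Ioo_mem_nhds hq₀ hq₁) fun t ht => hasDerivAt_energyProfile β ht.1 ht.2)
    ((hasDerivAt_inv_two_mul_one_sub_sqrt hq₀ hq₁).const_mul (β ^ 2)⁻¹), fun a b => ?_⟩
  have hs := one_sub_sqrt_pos hq₁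
  exact hessian_comp_bilinear_self_nonneg (strainForm_self_nonneg α β ξ) (by positivity)
    (by positivity) (a, b)

/-- Proposition 3.1: the Hessian of the strain-energy density
`W` at a strain `(χ, γ)` with `0 < Q(χ, γ) < 1` is positive semi-definite. -/
theorem hessian_Wdens_posSemidef (α β ξ : ℝ) (hα : 0 < α) (hβ : 0 < β) (hξ : 0 < ξ)
    (χ : Fin 2 → ℝ) (γ : Fin 2 → Fin 2 → ℝ)
    (h0 : 0 < Qform α β ξ χ γ) (h1 : Qform α β ξ χ γ < 1) :
    ∃ D : ((Fin 2 → ℝ) × (Fin 2 → Fin 2 → ℝ)) →L[ℝ]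
        ((Fin 2 → ℝ) × (Fin 2 → Fin 2 → ℝ)) →L[ℝ] ℝ,
      HasFDerivAt
        (fderiv ℝ (fun p : (Fin 2 → ℝ) × (Fin 2 → Fin 2 → ℝ) => Wdens α β ξ p.1 p.2))
        D (χ, γ) ∧
      ∀ (a : Fin 2 → ℝ) (b : Fin 2 → Fin 2 → ℝ), 0 ≤ D (a, b) (a, b) :=
  hessian_Wdens_posSemidef_general α β ξ χ γ h0 h1
end
end

section
/- Legendre duality between the strain energy and the complementary strain energy: for all positive reals α, β, ξ and all strains χ ∈ ℝ², γ ∈ ℝ^{2×2} with Q(χ, γ) < 1, the stresses (m, τ) = T(χ, γ) satisfy W(χ, γ) + W*(m, τ) = m₁·χ₁ + m₂·χ₂ + τ₁₁·γ₁₁ + τ₁₂·γ₁₂ + τ₂₁·γ₂₁ + τ₂₂·γ₂₂. -/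
noncomputable section

/-! With `s = √Q`, both energies are radial: `W = φ(s) / β²` and `W* = φ*(t) / β²` with
`φ(s) = -s - log (1 - s)` and `φ*(t) = t - log (1 + t)`, which are Legendre conjugates with
`t = φ'(s) = s / (1 - s)`. The map `T` scales the strain so that `√Q*(T(χ, γ)) = s / (1 - s)`,
and the pairing `⟨T(χ, γ), (χ, γ)⟩` equals `s² / (β² (1 - s)) = s t / β²`, so the duality
reduces to the scalar Fenchel–Young equality `φ(s) + φ*(t) = s t`. -/

lemma neg_add_log_one_sub_add_sub_log_one_add {s : ℝ} (hs : s ≠ 1) :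
    -(s + Real.log (1 - s)) + (s / (1 - s) - Real.log (1 + s / (1 - s))) = s * (s / (1 - s)) := by
  have h1s : 1 - s ≠ 0 := sub_ne_zero.mpr hs.symm
  have hinv : 1 + s / (1 - s) = (1 - s)⁻¹ := by field_simp; ring
  rw [hinv, Real.log_inv]
  field_simp
  ring

section

variable (α β ξ : ℝ) (χ : Fin 2 → ℝ) (γ : Fin 2 → Fin 2 → ℝ)

lemma Qform_nonneg : 0 ≤ Qform α β ξ χ γ := by
  unfold Qform
  positivity

lemma sqrt_Qform_lt_one (hQ : Qform α β ξ χ γ < 1) : Real.sqrt (Qform α β ξ χ γ) < 1 :=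
  (Real.sqrt_lt' one_pos).mpr (by rwa [one_pow])

variable {α β ξ}

lemma Qstar_Tmap :
    Qstar α β ξ (Tmap α β ξ χ γ).1 (Tmap α β ξ χ γ).2 =
      Qform α β ξ χ γ / (1 - Real.sqrt (Qform α β ξ χ γ)) ^ 2 := by
  simp only [Qstar, Tmap]
  generalize 1 - Real.sqrt (Qform α β ξ χ γ) = d
  unfold Qform
  field_simp

lemma sqrt_Qstar_Tmap (hQ : Qform α β ξ χ γ < 1) :
    Real.sqrt (Qstar α β ξ (Tmap α β ξ χ γ).1 (Tmap α β ξ χ γ).2) =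
      Real.sqrt (Qform α β ξ χ γ) / (1 - Real.sqrt (Qform α β ξ χ γ)) := by
  have h1s : 0 < 1 - Real.sqrt (Qform α β ξ χ γ) := sub_pos.mpr (sqrt_Qform_lt_one α β ξ χ γ hQ)
  rw [Qstar_Tmap χ γ, Real.sqrt_div' _ (sq_nonneg _), Real.sqrt_sq h1s.le]

lemma Tmap_pairing (hβ : β ≠ 0) :
    (Tmap α β ξ χ γ).1 0 * χ 0 + (Tmap α β ξ χ γ).1 1 * χ 1 +
      (Tmap α β ξ χ γ).2 0 0 * γ 0 0 + (Tmap α β ξ χ γ).2 0 1 * γ 0 1 +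
      (Tmap α β ξ χ γ).2 1 0 * γ 1 0 + (Tmap α β ξ χ γ).2 1 1 * γ 1 1 =
      Qform α β ξ χ γ / (β ^ 2 * (1 - Real.sqrt (Qform α β ξ χ γ))) := by
  simp only [Tmap]
  generalize 1 - Real.sqrt (Qform α β ξ χ γ) = d
  unfold Qform
  field_simp
  ring

end

theorem legendre_duality_general (α β ξ : ℝ) (hβ : 0 < β)
    (χ : Fin 2 → ℝ) (γ : Fin 2 → Fin 2 → ℝ) (hQ : Qform α β ξ χ γ < 1) :
    Wdens α β ξ χ γ + Wstar α β ξ (Tmap α β ξ χ γ).1 (Tmap α β ξ χ γ).2 =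
      (Tmap α β ξ χ γ).1 0 * χ 0 + (Tmap α β ξ χ γ).1 1 * χ 1 +
      (Tmap α β ξ χ γ).2 0 0 * γ 0 0 + (Tmap α β ξ χ γ).2 0 1 * γ 0 1 +
      (Tmap α β ξ χ γ).2 1 0 * γ 1 0 + (Tmap α β ξ χ γ).2 1 1 * γ 1 1 := by
  rw [Tmap_pairing χ γ hβ.ne', Wdens, Wstar, sqrt_Qstar_Tmap χ γ hQ]
  have hQs : Qform α β ξ χ γ = Real.sqrt (Qform α β ξ χ γ) * Real.sqrt (Qform α β ξ χ γ) :=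
    (Real.mul_self_sqrt (Qform_nonneg α β ξ χ γ)).symm
  have hs : Real.sqrt (Qform α β ξ χ γ) ≠ 1 := (sqrt_Qform_lt_one α β ξ χ γ hQ).ne
  have hduality := neg_add_log_one_sub_add_sub_log_one_add hs
  generalize Real.sqrt (Qform α β ξ χ γ) = s at hQs hs hduality ⊢
  rw [hQs]
  have h1s : 1 - s ≠ 0 := sub_ne_zero.mpr hs.symm
  calc _ = 1 / β ^ 2 * (-(s + Real.log (1 - s)) + (s / (1 - s) - Real.log (1 + s / (1 - s)))) := by
        ring
    _ = s * s / (β ^ 2 * (1 - s)) := by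
        rw [hduality]
        field_simp

/-- Legendre duality between the strain energy and the
complementary strain energy: `W(χ, γ) + W*(T(χ, γ)) = ⟨T(χ, γ), (χ, γ)⟩`. -/
theorem legendre_duality (α β ξ : ℝ) (hα : 0 < α) (hβ : 0 < β) (hξ : 0 < ξ)
    (χ : Fin 2 → ℝ) (γ : Fin 2 → Fin 2 → ℝ) (hQ : Qform α β ξ χ γ < 1) :
    Wdens α β ξ χ γ + Wstar α β ξ (Tmap α β ξ χ γ).1 (Tmap α β ξ χ γ).2 =
      (Tmap α β ξ χ γ).1 0 * χ 0 + (Tmap α β ξ χ γ).1 1 * χ 1 +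
      (Tmap α β ξ χ γ).2 0 0 * γ 0 0 + (Tmap α β ξ χ γ).2 0 1 * γ 0 1 +
      (Tmap α β ξ χ γ).2 1 0 * γ 1 0 + (Tmap α β ξ χ γ).2 1 1 * γ 1 1 :=
  legendre_duality_general α β ξ hβ χ γ hQ
end
end
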